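/- arXiv:2009.14730 — 4 statements merged into one kernel-verified Lean document; each statement's English description precedes it below -/
import Mathlib

section
/- Let Φ:[0,∞)→ℝ be a continuous convex function with Φ(1)=0, and let P, Q be probability distributions on a finite set Ω with Q(ω)>0 for all ω. Then the Φ-divergence D_Φ(P‖Q) = Σ_ω Q(ω)Φ(P(ω)/Q(ω)) satisfies D_Φ(P‖Q) = sup over functions k:Ω→ℝ of ( Σ_ω P(ω)k(ω) − Σ_ω Q(ω)Φ*(k(ω)) ), where Φ*(b) = sup_{a≥0} (ab − Φ(a)) is the convex conjugate. -/
/-!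
For `a ≥ 0` the biconjugate of `Φ` at `a` is `Φ a`: Fenchel–Young gives `a b - Φ* b ≤ Φ a`; for
`a > 0` a subgradient of `Φ` at `a` (its right derivative) attains equality, and at `a = 0`, where
subgradients may fail to exist, continuity of `Φ` at `0` together with an affine minorant shows
that `-Φ* b` approaches `Φ 0` as `b → -∞`. Scaling by `Q ω` gives the perspective identity
`Q ω Φ(P ω / Q ω) = sup_b (P ω b - Q ω Φ* b)`, and since `k` ranges over all functions `Ω → dom Φ*`,
the supremum of the sum over `ω` is the sum of the suprema.
-/

open scoped BigOperators

/-- The set whose supremum defines the convex conjugate of `Φ` (with domain `[0,∞)`). -/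
def conjSet (Φ : ℝ → ℝ) (b : ℝ) : Set ℝ := {y | ∃ a : ℝ, 0 ≤ a ∧ y = a * b - Φ a}

/-- Convex conjugate `Φ*` of `Φ : [0,∞) → ℝ` (real supremum). -/
noncomputable def conj (Φ : ℝ → ℝ) (b : ℝ) : ℝ := sSup (conjSet Φ b)

/-- The (effective) domain of the conjugate `Φ*`: points where `Φ*` is finite. -/
def domStar (Φ : ℝ → ℝ) : Set ℝ := {b | BddAbove (conjSet Φ b)}

open Set

lemma ConvexOn.add_rightDeriv_mul_sub_le {S : Set ℝ} {f : ℝ → ℝ} (hf : ConvexOn ℝ S f)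
    {x y : ℝ} (hx : x ∈ interior S) (hy : y ∈ S) :
    f x + derivWithin f (Ioi x) x * (y - x) ≤ f y := by
  rcases lt_trichotomy y x with hyx | rfl | hxy
  · have h := (hf.slope_le_leftDeriv_of_mem_interior hy hx hyx).trans
      (hf.leftDeriv_le_rightDeriv_of_mem_interior hx)
    rw [slope_def_field, div_le_iff₀ (sub_pos.2 hyx)] at h
    linarith
  · simp
  · have h := hf.rightDeriv_le_slope_of_mem_interior hx hy hxy
    rw [slope_def_field, le_div_iff₀ (sub_pos.2 hxy)] at h
    linarith

section conj

variable {Φ : ℝ → ℝ}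

lemma mul_sub_le_conj {a b : ℝ} (hb : b ∈ domStar Φ) (ha : 0 ≤ a) : a * b - Φ a ≤ conj Φ b :=
  le_csSup hb ⟨a, ha, rfl⟩

lemma mem_domStar_and_conj_le {b c : ℝ} (h : ∀ t, 0 ≤ t → t * b - Φ t ≤ c) :
    b ∈ domStar Φ ∧ conj Φ b ≤ c := by
  have hub : c ∈ upperBounds (conjSet Φ b) := by
    rintro _ ⟨t, ht, rfl⟩
    exact h t ht
  exact ⟨⟨c, hub⟩, csSup_le ⟨_, 0, le_rfl, rfl⟩ hub⟩

lemma exists_conj_le_sub_of_continuousWithinAt (hconv : ConvexOn ℝ (Ici 0) Φ)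
    (hcont : ContinuousWithinAt Φ (Ici 0) 0) {ε : ℝ} (hε : 0 < ε) :
    ∃ b ∈ domStar Φ, conj Φ b ≤ ε - Φ 0 := by
  set m := derivWithin Φ (Ioi 1) 1
  have hminor : ∀ t, 0 ≤ t → Φ 1 + m * (t - 1) ≤ Φ t := fun t ht =>
    hconv.add_rightDeriv_mul_sub_le (by simp) ht
  set gap := Φ 0 - (Φ 1 - m)
  have hgap : 0 ≤ gap := by linarith [hminor 0 le_rfl]
  obtain ⟨δ, hδ, hnear⟩ := Metric.continuousWithinAt_iff.1 hcont ε hε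
  -- Below `δ`, `Φ t` is close to `Φ 0`; beyond `δ`, a slope `b` this negative beats the minorant.
  set b := min 0 (m - gap / δ)
  have hbm : b - m ≤ -(gap / δ) := by linarith [min_le_right 0 (m - gap / δ)]
  have hδbm : δ * (b - m) ≤ -gap := by
    nlinarith [mul_div_cancel₀ gap hδ.ne']
  refine ⟨b, mem_domStar_and_conj_le fun t ht => ?_⟩
  rcases lt_or_ge t δ with htδ | htδ
  · have hclose := hnear ht (by rwa [Real.dist_eq, sub_zero, abs_of_nonneg ht])
    rw [Real.dist_eq] at hclose
    have : t * b ≤ 0 := mul_nonpos_of_nonneg_of_nonpos ht (min_le_left _ _)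
    linarith [neg_abs_le (Φ t - Φ 0)]
  · have : t * (b - m) ≤ δ * (b - m) :=
      mul_le_mul_of_nonpos_right htδ (by linarith [div_nonneg hgap hδ.le])
    nlinarith [hminor t ht]

theorem isLUB_mul_sub_conj (hconv : ConvexOn ℝ (Ici 0) Φ)
    (hcont : ContinuousWithinAt Φ (Ici 0) 0) {a : ℝ} (ha : 0 ≤ a) :
    IsLUB ((fun b => a * b - conj Φ b) '' domStar Φ) (Φ a) := by
  refine ⟨?_, fun u hu => ?_⟩
  · rintro _ ⟨b, hb, rfl⟩
    linarith [mul_sub_le_conj hb ha]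
  rcases ha.eq_or_lt with rfl | ha
  · refine le_of_forall_pos_le_add fun ε hε => ?_
    obtain ⟨b, hb, hle⟩ := exists_conj_le_sub_of_continuousWithinAt hconv hcont hε
    linarith [hu ⟨b, hb, rfl⟩]
  · set r := derivWithin Φ (Ioi a) a
    have hsub : ∀ t, 0 ≤ t → t * r - Φ t ≤ a * r - Φ a := fun t ht => by
      linarith [hconv.add_rightDeriv_mul_sub_le (by simpa using ha) ht]
    obtain ⟨hr, hle⟩ := mem_domStar_and_conj_le hsub
    linarith [hu ⟨r, hr, rfl⟩]

theorem isLUB_mul_sub_mul_conj (hconv : ConvexOn ℝ (Ici 0) Φ)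
    (hcont : ContinuousWithinAt Φ (Ici 0) 0) {p q : ℝ} (hp : 0 ≤ p) (hq : 0 < q) :
    IsLUB ((fun b => p * b - q * conj Φ b) '' domStar Φ) (q * Φ (p / q)) := by
  have h := (isLUB_mul_sub_conj hconv hcont (div_nonneg hp hq.le)).mul_left hq.le
  have hscale : (fun b => q * (p / q * b - conj Φ b)) = fun b => p * b - q * conj Φ b := by
    funext b
    rw [mul_sub, ← mul_assoc, mul_div_cancel₀ p hq.ne']
  rwa [image_image, hscale] at h

end conj

theorem isLUB_sum_of_forall_isLUB {ι α : Type*} [Fintype ι] {D : Set α} {F : ι → α → ℝ}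
    {f : ι → ℝ} (h : ∀ i, IsLUB (F i '' D) (f i)) :
    IsLUB {u | ∃ k : ι → α, (∀ i, k i ∈ D) ∧ u = ∑ i, F i (k i)} (∑ i, f i) := by
  refine ⟨?_, fun u hu => le_of_forall_pos_le_add fun ε hε => ?_⟩
  · rintro _ ⟨k, hk, rfl⟩
    exact Finset.sum_le_sum fun i _ => (h i).1 ⟨k i, hk i, rfl⟩
  set δ := ε / (Fintype.card ι + 1)
  have hδ : 0 < δ := by positivity
  have hcard : Fintype.card ι * δ ≤ ε := by
    rw [mul_div_assoc', div_le_iff₀ (by positivity)]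
    nlinarith
  have hnear : ∀ i, ∃ k ∈ D, f i - δ ≤ F i k := fun i => by
    obtain ⟨_, ⟨k, hk, rfl⟩, hlt, -⟩ := (h i).exists_between_sub_self hδ
    exact ⟨k, hk, hlt.le⟩
  choose k hk hle using hnear
  calc ∑ i, f i = ∑ i, (f i - δ) + Fintype.card ι * δ := by
        simp [Finset.sum_sub_distrib]
    _ ≤ ∑ i, F i (k i) + Fintype.card ι * δ := by gcongr with i; exact hle i
    _ ≤ u + ε := add_le_add (hu ⟨k, hk, rfl⟩) hcard

theorem variational_representation_general {Ω : Type*} [Fintype Ω]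
    (Φ : ℝ → ℝ) (hconv : ConvexOn ℝ (Set.Ici 0) Φ)
    (hcont : ContinuousOn Φ (Set.Ici 0))
    (P Q : Ω → ℝ) (hP0 : ∀ ω, 0 ≤ P ω)
    (hQ0 : ∀ ω, 0 < Q ω) :
    IsLUB {u : ℝ | ∃ k : Ω → ℝ, (∀ ω, k ω ∈ domStar Φ) ∧
        u = ∑ ω, P ω * k ω - ∑ ω, Q ω * conj Φ (k ω)}
      (∑ ω, Q ω * Φ (P ω / Q ω)) := by
  simpa only [Finset.sum_sub_distrib] using isLUB_sum_of_forall_isLUB fun ω =>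
    isLUB_mul_sub_mul_conj hconv (hcont 0 self_mem_Ici) (hP0 ω) (hQ0 ω)

/-- Variational representation of the Φ-divergence on a finite outcome space:
`D_Φ(P‖Q) = sup_k ( Σ P·k − Σ Q·Φ*(k) )` over `k` taking values in `dom(Φ*)`. -/
theorem variational_representation {Ω : Type*} [Fintype Ω]
    (Φ : ℝ → ℝ) (hconv : ConvexOn ℝ (Set.Ici 0) Φ)
    (hcont : ContinuousOn Φ (Set.Ici 0)) (hΦ1 : Φ 1 = 0)
    (P Q : Ω → ℝ) (hP0 : ∀ ω, 0 ≤ P ω) (hP1 : ∑ ω, P ω = 1)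
    (hQ0 : ∀ ω, 0 < Q ω) (hQ1 : ∑ ω, Q ω = 1) :
    IsLUB {u : ℝ | ∃ k : Ω → ℝ, (∀ ω, k ω ∈ domStar Φ) ∧
        u = ∑ ω, P ω * k ω - ∑ ω, Q ω * conj Φ (k ω)}
      (∑ ω, Q ω * Φ (P ω / Q ω)) :=
  variational_representation_general Φ hconv hcont P Q hP0 hQ0
end

section
/- (Truth-telling yields the Φ-mutual information) Let X, Y be finite sets, P a joint distribution on X×Y with marginals P_X, P_Y having full support, and Φ:[0,∞)→ℝ a continuous convex function with Φ(1)=0. Let K* : X×Y→ℝ satisfy K*(x,y) ∈ ∂Φ(P(x,y)/(P_X(x)P_Y(y))) for all (x,y). Then Σ_{x,y} P(x,y)K*(x,y) − Σ_{x,y} P_X(x)P_Y(y)Φ*(K*(x,y)) = D_Φ(P ‖ P_X⊗P_Y). -/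
open scoped BigOperators

/-- `b` is a subgradient of `Φ : [0,∞) → ℝ` at `a`. -/
def IsSubgradAt (Φ : ℝ → ℝ) (a b : ℝ) : Prop := ∀ c, 0 ≤ c → Φ a + b * (c - a) ≤ Φ c

/-- Marginal on the first coordinate of a joint distribution `P` on `X × Y`. -/
noncomputable def margX {X Y : Type*} [Fintype Y] (P : X → Y → ℝ) (x : X) : ℝ := ∑ y, P x y

/-- Marginal on the second coordinate. -/
noncomputable def margY {X Y : Type*} [Fintype X] (P : X → Y → ℝ) (y : Y) : ℝ := ∑ x, P x y

/-- Point-wise ratio `P(x,y) / (P_X(x) P_Y(y))`. -/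
noncomputable def ratio {X Y : Type*} [Fintype X] [Fintype Y] (P : X → Y → ℝ) (x : X) (y : Y) : ℝ :=
  P x y / (margX P x * margY P y)

/-- Φ-mutual information `D_Φ(P ‖ P_X ⊗ P_Y)` of a joint distribution on a finite space. -/
noncomputable def phiMI {X Y : Type*} [Fintype X] [Fintype Y] (Φ : ℝ → ℝ) (P : X → Y → ℝ) : ℝ :=
  ∑ x, ∑ y, margX P x * margY P y * Φ (ratio P x y)

/-- Ex-ante truth-telling payment of the Φ-pairing mechanism with scoring function `K`. -/
noncomputable def payoff {X Y : Type*} [Fintype X] [Fintype Y]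
    (Φ : ℝ → ℝ) (P : X → Y → ℝ) (K : X → Y → ℝ) : ℝ :=
  (∑ x, ∑ y, P x y * K x y) - ∑ x, ∑ y, margX P x * margY P y * conj Φ (K x y)

/-- Ex-ante payment to Alice in the Φ-pairing mechanism under strategies `θA, θB`. -/
noncomputable def uA {X Y : Type*} [Fintype X] [Fintype Y]
    (Φ : ℝ → ℝ) (P : X → Y → ℝ) (θA : X → X → ℝ) (θB : Y → Y → ℝ) (K : X → Y → ℝ) : ℝ :=
  (∑ x, ∑ y, P x y * ∑ x', ∑ y', θA x x' * θB y y' * K x' y') -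
    ∑ x, ∑ y, margX P x * margY P y * ∑ x', ∑ y', θA x x' * θB y y' * conj Φ (K x' y')

/-- Stochastic relevance: distinct signals induce distinct posteriors, for both agents. -/
def StochRelevant {X Y : Type*} [Fintype X] [Fintype Y] (P : X → Y → ℝ) : Prop :=
  (∀ x x' : X, x ≠ x' → ∃ y, P x y / margX P x ≠ P x' y / margX P x') ∧
  (∀ y y' : Y, y ≠ y' → ∃ x, P x y / margY P y ≠ P x y' / margY P y')

/-! A subgradient `b` of `Φ` at `a` attains the supremum defining `Φ*(b)` at `a` (the equality case of
Fenchel–Young), so `Φ*(K*(x,y)) = r K*(x,y) - Φ(r)` with `r = P(x,y)/(P_X(x)P_Y(y))`. Weighted by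
`P_X(x)P_Y(y)`, the terms `r K*(x,y)` become `P(x,y) K*(x,y)` and cancel, leaving `Σ P_X P_Y Φ(r)`. -/

theorem IsSubgradAt.isGreatest_conjSet {Φ : ℝ → ℝ} {a b : ℝ} (ha : 0 ≤ a)
    (h : IsSubgradAt Φ a b) : IsGreatest (conjSet Φ b) (a * b - Φ a) := by
  refine ⟨⟨a, ha, rfl⟩, ?_⟩
  rintro _ ⟨c, hc, rfl⟩
  nlinarith [h c hc]

theorem IsSubgradAt.conj_eq {Φ : ℝ → ℝ} {a b : ℝ} (ha : 0 ≤ a) (h : IsSubgradAt Φ a b) :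
    conj Φ b = a * b - Φ a :=
  (h.isGreatest_conjSet ha).csSup_eq

theorem margX_mul_margY_mul_ratio {X Y : Type*} [Fintype X] [Fintype Y] {P : X → Y → ℝ}
    {x : X} {y : Y} (h : margX P x * margY P y ≠ 0) :
    margX P x * margY P y * ratio P x y = P x y :=
  mul_div_cancel₀ (P x y) h

theorem ratio_nonneg {X Y : Type*} [Fintype X] [Fintype Y] {P : X → Y → ℝ}
    (hP0 : ∀ x y, 0 ≤ P x y) (x : X) (y : Y) : 0 ≤ ratio P x y :=
  div_nonneg (hP0 x y) (mul_nonneg (Finset.sum_nonneg fun y _ => hP0 x y)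
    (Finset.sum_nonneg fun x _ => hP0 x y))

theorem truthtelling_yields_phiMI_general {X Y : Type*} [Fintype X] [Fintype Y]
    (Φ : ℝ → ℝ)
    (P : X → Y → ℝ) (hP0 : ∀ x y, 0 ≤ P x y)
    (hPX : ∀ x, 0 < margX P x) (hPY : ∀ y, 0 < margY P y)
    (K : X → Y → ℝ) (hK : ∀ x y, IsSubgradAt Φ (ratio P x y) (K x y)) :
    payoff Φ P K = phiMI Φ P := by
  unfold payoff phiMI
  rw [← Finset.sum_sub_distrib]
  refine Finset.sum_congr rfl fun x _ => ?_
  rw [← Finset.sum_sub_distrib]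
  refine Finset.sum_congr rfl fun y _ => ?_
  have hmarg : margX P x * margY P y ≠ 0 := (mul_pos (hPX x) (hPY y)).ne'
  rw [(hK x y).conj_eq (ratio_nonneg hP0 x y), ← margX_mul_margY_mul_ratio hmarg]
  ring

/-- Truth-telling with a `(P,Φ)`-ideal scoring function yields the Φ-mutual information. -/
theorem truthtelling_yields_phiMI {X Y : Type*} [Fintype X] [Fintype Y]
    (Φ : ℝ → ℝ) (hconv : ConvexOn ℝ (Set.Ici 0) Φ)
    (hcont : ContinuousOn Φ (Set.Ici 0)) (hΦ1 : Φ 1 = 0)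
    (P : X → Y → ℝ) (hP0 : ∀ x y, 0 ≤ P x y) (hP1 : ∑ x, ∑ y, P x y = 1)
    (hPX : ∀ x, 0 < margX P x) (hPY : ∀ y, 0 < margY P y)
    (K : X → Y → ℝ) (hK : ∀ x y, IsSubgradAt Φ (ratio P x y) (K x y)) :
    payoff Φ P K = phiMI Φ P :=
  truthtelling_yields_phiMI_general Φ P hP0 hPX hPY K hK
end

section
/- (Oblivious strategies earn nonpositive payment) Let X, Y be finite sets, P a joint distribution on X×Y with full-support marginals, and Φ:[0,∞)→ℝ continuous convex with Φ(1)=0. Suppose θ_A : X→Δ(X) is oblivious, i.e., θ_A(x,x̂)=θ_A(x',x̂) for all x,x',x̂, and θ_B : Y→Δ(Y) is arbitrary. Then for any scoring function K : X×Y→dom(Φ*), the ex-ante payment u_A(θ,P,K) = Σ_{x,y}P(x,y)Σ_{x̂,ŷ}θ_A(x,x̂)θ_B(y,ŷ)K(x̂,ŷ) − Σ_{x,y}P_X(x)P_Y(y)Σ_{x̂,ŷ}θ_A(x,x̂)θ_B(y,ŷ)Φ*(K(x̂,ŷ)) is at most 0. -/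
open scoped BigOperators

/-- Oblivious strategies earn nonpositive ex-ante payment. -/
theorem oblivious_nonpositive {X Y : Type*} [Fintype X] [Fintype Y]
    (Φ : ℝ → ℝ) (hconv : ConvexOn ℝ (Set.Ici 0) Φ)
    (hcont : ContinuousOn Φ (Set.Ici 0)) (hΦ1 : Φ 1 = 0)
    (P : X → Y → ℝ) (hP0 : ∀ x y, 0 ≤ P x y) (hP1 : ∑ x, ∑ y, P x y = 1)
    (hPX : ∀ x, 0 < margX P x) (hPY : ∀ y, 0 < margY P y)
    (θA : X → X → ℝ) (hθA0 : ∀ x x', 0 ≤ θA x x') (hθA1 : ∀ x, ∑ x', θA x x' = 1)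
    (hobl : ∀ x x' xh : X, θA x xh = θA x' xh)
    (θB : Y → Y → ℝ) (hθB0 : ∀ y y', 0 ≤ θB y y') (hθB1 : ∀ y, ∑ y', θB y y' = 1)
    (K : X → Y → ℝ) (hK : ∀ x y, K x y ∈ domStar Φ) :
    uA Φ P θA θB K ≤ 0 := by
  rcases isEmpty_or_nonempty X with hX | hX
  · simp [uA]
  obtain ⟨x₀⟩ := hX
  have hq : ∀ x x', θA x x' = θA x₀ x' := fun x x' => hobl x x₀ x'
  have hKc : ∀ x y, K x y ≤ conj Φ (K x y) := by
    intro x y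
    have hm : K x y ∈ conjSet Φ (K x y) := ⟨1, zero_le_one, by simp [hΦ1]⟩
    exact le_csSup (hK x y) hm
  have hsum : ∑ x, margX P x = 1 := by simpa [margX] using hP1
  set A : Y → ℝ := fun y => ∑ x', ∑ y', θA x₀ x' * θB y y' * K x' y' with hA
  set B : Y → ℝ := fun y => ∑ x', ∑ y', θA x₀ x' * θB y y' * conj Φ (K x' y') with hB
  have h1 : (∑ x, ∑ y, P x y * ∑ x', ∑ y', θA x x' * θB y y' * K x' y')
      = ∑ y, margY P y * A y := by
    simp only [hq]
    rw [Finset.sum_comm]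
    refine Finset.sum_congr rfl fun y _ => ?_
    rw [margY, Finset.sum_mul]
  have h2 : (∑ x, ∑ y, margX P x * margY P y * ∑ x', ∑ y', θA x x' * θB y y' * conj Φ (K x' y'))
      = ∑ y, margY P y * B y := by
    simp only [hq]
    calc ∑ x, ∑ y, margX P x * margY P y * B y
        = ∑ x, margX P x * ∑ y, margY P y * B y := by
          refine Finset.sum_congr rfl fun x _ => ?_
          rw [Finset.mul_sum]
          exact Finset.sum_congr rfl fun y _ => by ring
      _ = (∑ x, margX P x) * ∑ y, margY P y * B y := by rw [Finset.sum_mul]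
      _ = ∑ y, margY P y * B y := by rw [hsum, one_mul]
  have h : uA Φ P θA θB K = ∑ y, margY P y * (A y - B y) := by
    rw [uA, h1, h2, ← Finset.sum_sub_distrib]
    refine Finset.sum_congr rfl fun y _ => ?_
    ring
  rw [h]
  refine Finset.sum_nonpos fun y _ => ?_
  have hAB : A y - B y ≤ 0 := by
    rw [hA, hB, ← Finset.sum_sub_distrib]
    refine Finset.sum_nonpos fun x' _ => ?_
    rw [← Finset.sum_sub_distrib]
    refine Finset.sum_nonpos fun y' _ => ?_
    have : K x' y' - conj Φ (K x' y') ≤ 0 := sub_nonpos.mpr (hKc x' y')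
    have hnn : 0 ≤ θA x₀ x' * θB y y' := mul_nonneg (hθA0 x₀ x') (hθB0 y y')
    nlinarith
  exact mul_nonpos_of_nonneg_of_nonpos (le_of_lt (hPY y)) hAB
end

section
/- (Empirical risk maximizer Bregman bound) Let Ω be a finite set, Φ:[0,∞)→ℝ strictly convex and twice differentiable, K a family of functions Ω→dom(Φ*), and P, Q probability distributions on Ω (Q full support) with empirical estimates P̃, Q̃. Suppose K* ∈ K maximizes k ↦ Σ P(ω)k(ω) − Σ Q(ω)Φ*(k(ω)) over all functions (i.e., K* = Φ'(P/Q)), and K̃ ∈ K maximizes k ↦ Σ P̃(ω)k(ω) − Σ Q̃(ω)Φ*(k(ω)) over K. Then B_{Φ*,Q}(K̃,K*) ≤ sup_{k∈K} | Σ_ω (Φ*(k(ω)) − Φ*(K*(ω)))(Q(ω)−Q̃(ω)) − Σ_ω (k(ω)−K*(ω))(P(ω)−P̃(ω)) |. -/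
open scoped BigOperators

/-- The ideal scoring function `K* = Φ'(P/Q)`. -/
noncomputable def Kstar {Ω : Type*} (Φ : ℝ → ℝ) (P Q : Ω → ℝ) (ω : Ω) : ℝ :=
  deriv Φ (P ω / Q ω)

/-
`K*` maximizes the population objective coordinatewise over `dom Φ*`, which is a down-set. At
each `ω`, Fermat's rule along the segment from `K*(ω)` to `K̃(ω)` gives
`P(ω) (K̃ - K*)(ω) ≤ Q(ω) (Φ*)'(K*(ω)) (K̃ - K*)(ω)`, so the Bregman divergence is at most the
population excess risk of `K*` over `K̃`. Adding the nonnegative empirical excess risk of `K̃`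
over `K*` turns this into the deviation term at `k = K̃`, which is bounded by the supremum.
-/

open Set Filter Topology

lemma isMaxOn_apply_of_sum_le {ι α : Type*} [Fintype ι] [DecidableEq ι] (f : ι → α → ℝ)
    {S : Set α} {k : ι → α} (hk : ∀ i, k i ∈ S)
    (hmax : ∀ k' : ι → α, (∀ i, k' i ∈ S) → ∑ i, f i (k' i) ≤ ∑ i, f i (k i)) (i : ι) :
    IsMaxOn (f i) S (k i) := by
  refine isMaxOn_iff.2 fun b hb => ?_
  have hupd : ∀ j, Function.update k i b j ∈ S := by
    intro j
    rcases eq_or_ne j i with rfl | hji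
    · simpa using hb
    · simpa [hji] using hk j
  have h := hmax _ hupd
  simp only [Function.apply_update f k i b] at h
  rw [Finset.sum_update_of_mem (Finset.mem_univ i),
    Finset.sum_eq_add_sum_sdiff_singleton_of_mem (Finset.mem_univ i)] at h
  linarith

lemma IsMaxOn.hasDerivAt_mul_sub_nonpos {f : ℝ → ℝ} {S : Set ℝ} {x y f' : ℝ} (h : IsMaxOn f S x)
    (hseg : segment ℝ x y ⊆ S) (hf : HasDerivAt f f' x) : f' * (y - x) ≤ 0 := by
  have := h.localize.hasFDerivWithinAt_nonpos hf.hasFDerivAt.hasFDerivWithinAt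
    (sub_mem_posTangentConeAt_of_segment_subset hseg)
  simpa [mul_comm] using this

lemma eventually_exists_mem_Icc_eq_of_strictMonoOn {f : ℝ → ℝ} {t ε : ℝ} (hε : 0 < ε)
    (hf : ContinuousOn f (Icc (t - ε) (t + ε))) (hmono : StrictMonoOn f (Icc (t - ε) (t + ε))) :
    ∀ᶠ b in 𝓝 (f t), ∃ s ∈ Icc (t - ε) (t + ε), f s = b := by
  have hl : t - ε ∈ Icc (t - ε) (t + ε) := ⟨le_rfl, by linarith⟩
  have hr : t + ε ∈ Icc (t - ε) (t + ε) := ⟨by linarith, le_rfl⟩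
  have hc : t ∈ Icc (t - ε) (t + ε) := ⟨by linarith, by linarith⟩
  filter_upwards [Icc_mem_nhds (hmono hl hc (by linarith)) (hmono hc hr (by linarith))]
    with b hb using intermediate_value_Icc (by linarith) hf hb

section Conjugate

variable {Φ : ℝ → ℝ}

lemma isLowerSet_domStar : IsLowerSet (domStar Φ) := by
  rintro b b' hb' ⟨M, hM⟩
  refine ⟨M, ?_⟩
  rintro _ ⟨a, ha, rfl⟩
  have := hM ⟨a, ha, rfl⟩
  nlinarith [mul_le_mul_of_nonneg_left hb' ha]

lemma segment_subset_domStar {x y : ℝ} (hx : x ∈ domStar Φ) (hy : y ∈ domStar Φ) :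
    segment ℝ x y ⊆ domStar Φ := by
  rw [segment_eq_uIcc]
  exact isLowerSet_domStar.ordConnected.uIcc_subset hx hy

lemma isGreatest_conjSet_deriv (hconv : ConvexOn ℝ (Ici 0) Φ) {s : ℝ} (hs : 0 < s)
    (hd : DifferentiableAt ℝ Φ s) :
    IsGreatest (conjSet Φ (deriv Φ s)) (s * deriv Φ s - Φ s) := by
  refine ⟨⟨s, hs.le, rfl⟩, ?_⟩
  rintro _ ⟨a, ha, rfl⟩
  have hderiv : HasDerivAt (fun a => Φ a - a * deriv Φ s) 0 s :=
    (hd.hasDerivAt.sub ((hasDerivAt_id' s).mul_const _)).congr_deriv (by ring)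
  have hmin : IsMinOn (fun a => Φ a - a * deriv Φ s) (Ici 0) s :=
    (hconv.sub ((LinearMap.toSpanSingleton ℝ ℝ (deriv Φ s)).concaveOn (convex_Ici 0))
      ).isMinOn_of_rightDeriv_eq_zero
      (by simpa using hs) (hderiv.hasDerivWithinAt.derivWithin (uniqueDiffWithinAt_Ioi s))
  linarith [isMinOn_iff.1 hmin a ha]

lemma conj_deriv_eq (hconv : ConvexOn ℝ (Ici 0) Φ) {s : ℝ} (hs : 0 < s)
    (hd : DifferentiableAt ℝ Φ s) : conj Φ (deriv Φ s) = s * deriv Φ s - Φ s :=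
  (isGreatest_conjSet_deriv hconv hs hd).csSup_eq

-- `s` and `t` are subgradients of `Φ*` at `Φ'(s)` and `Φ'(t)`.
lemma abs_conj_deriv_sub_sub_le (hconv : ConvexOn ℝ (Ici 0) Φ) {s t : ℝ} (hs : 0 < s)
    (ht : 0 < t) (hds : DifferentiableAt ℝ Φ s) (hdt : DifferentiableAt ℝ Φ t) :
    |conj Φ (deriv Φ s) - conj Φ (deriv Φ t) - (deriv Φ s - deriv Φ t) * t| ≤
      |s - t| * |deriv Φ s - deriv Φ t| := by
  have hlow := (isGreatest_conjSet_deriv hconv hs hds).2 ⟨t, ht.le, rfl⟩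
  have hupp := (isGreatest_conjSet_deriv hconv ht hdt).2 ⟨s, hs.le, rfl⟩
  rw [conj_deriv_eq hconv hs hds, conj_deriv_eq hconv ht hdt, ← abs_mul]
  exact abs_le_abs (by nlinarith) (by nlinarith)

-- Near `Φ'(t)` every point is `Φ'(s)` with `s` close to `t` (intermediate value theorem), and
-- then the subgradient sandwich above is the little-o estimate.
lemma hasDerivAt_conj_deriv (hconv : StrictConvexOn ℝ (Ici 0) Φ)
    (hdiff : ContDiffOn ℝ 1 Φ (Ioi 0)) {t : ℝ} (ht : 0 < t) :
    HasDerivAt (conj Φ) t (deriv Φ t) := by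
  have hd : ∀ x ∈ Ioi (0 : ℝ), DifferentiableAt ℝ Φ x := fun x hx =>
    (hdiff.differentiableOn one_ne_zero).differentiableAt (isOpen_Ioi.mem_nhds hx)
  have hmono : StrictMonoOn (deriv Φ) (Ioi 0) :=
    (hconv.subset Ioi_subset_Ici_self (convex_Ioi 0)).strictMonoOn_deriv hd
  have hcont : ContinuousOn (deriv Φ) (Ioi 0) :=
    hdiff.continuousOn_deriv_of_isOpen isOpen_Ioi le_rfl
  refine hasDerivAt_iff_isLittleO.2 (Asymptotics.IsLittleO.of_bound fun c hc => ?_)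
  set ε := min c (t / 2)
  have hε : 0 < ε := lt_min hc (half_pos ht)
  have hIcc : Icc (t - ε) (t + ε) ⊆ Ioi 0 := fun x hx =>
    lt_of_lt_of_le (by linarith [min_le_right c (t / 2)]) hx.1
  filter_upwards [eventually_exists_mem_Icc_eq_of_strictMonoOn hε (hcont.mono hIcc)
    (hmono.mono hIcc)] with b hb
  obtain ⟨s, hs, rfl⟩ := hb
  have hst : |s - t| ≤ c := abs_sub_le_iff.2
    ⟨by linarith [hs.2, min_le_left c (t / 2)], by linarith [hs.1, min_le_left c (t / 2)]⟩
  simp only [Real.norm_eq_abs, smul_eq_mul]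
  calc _ ≤ |s - t| * |deriv Φ s - deriv Φ t| :=
        abs_conj_deriv_sub_sub_le hconv.convexOn (hIcc hs) ht (hd s (hIcc hs)) (hd t ht)
    _ ≤ c * |deriv Φ s - deriv Φ t| := by gcongr

-- Where `Φ*` is not differentiable, `deriv (conj Φ)` takes the junk value `0`; this happens only
-- when `p = 0`, since otherwise `x = Φ'(p / q)` with `p / q > 0`.
lemma mul_sub_le_mul_deriv_conj (hconv : StrictConvexOn ℝ (Ici 0) Φ)
    (hdiff : ContDiffOn ℝ 1 Φ (Ioi 0)) {p q x y : ℝ} (hp : 0 ≤ p) (hq : 0 < q)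
    (hx : x = deriv Φ (p / q)) (hmax : IsMaxOn (fun b => p * b - q * conj Φ b) (domStar Φ) x)
    (hxS : x ∈ domStar Φ) (hyS : y ∈ domStar Φ) :
    p * (y - x) ≤ q * (deriv (conj Φ) x * (y - x)) := by
  by_cases hd : DifferentiableAt ℝ (conj Φ) x
  · have := hmax.hasDerivAt_mul_sub_nonpos (segment_subset_domStar hxS hyS)
      (((hasDerivAt_id' x).const_mul p).sub (hd.hasDerivAt.const_mul q))
    linarith
  · obtain rfl | hp := hp.eq_or_lt
    · simp [deriv_zero_of_not_differentiableAt hd]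
    · exact absurd (hx ▸ (hasDerivAt_conj_deriv hconv hdiff (div_pos hp hq)).differentiableAt) hd

end Conjugate

theorem erm_bregman_bound_general {Ω : Type*} [Fintype Ω]
    (Φ : ℝ → ℝ) (hconv : StrictConvexOn ℝ (Set.Ici 0) Φ)
    (hdiff : ContDiffOn ℝ 2 Φ (Set.Ioi 0))
    (P Q Pt Qt : Ω → ℝ)
    (hP0 : ∀ ω, 0 ≤ P ω)
    (hQ0 : ∀ ω, 0 < Q ω)
    (𝒦 : Set (Ω → ℝ)) (hdom : ∀ k ∈ 𝒦, ∀ ω, k ω ∈ domStar Φ)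
    (hKs : Kstar Φ P Q ∈ 𝒦)
    (hKsmax : ∀ k : Ω → ℝ, (∀ ω, k ω ∈ domStar Φ) →
        (∑ ω, P ω * k ω) - ∑ ω, Q ω * conj Φ (k ω) ≤
          (∑ ω, P ω * Kstar Φ P Q ω) - ∑ ω, Q ω * conj Φ (Kstar Φ P Q ω))
    (Kt : Ω → ℝ) (hKt : Kt ∈ 𝒦)
    (hKtmax : ∀ k ∈ 𝒦,
        (∑ ω, Pt ω * k ω) - ∑ ω, Qt ω * conj Φ (k ω) ≤
          (∑ ω, Pt ω * Kt ω) - ∑ ω, Qt ω * conj Φ (Kt ω))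
    (hbdd : BddAbove {v : ℝ | ∃ k ∈ 𝒦, v =
        |(∑ ω, (conj Φ (k ω) - conj Φ (Kstar Φ P Q ω)) * (Q ω - Qt ω)) -
          ∑ ω, (k ω - Kstar Φ P Q ω) * (P ω - Pt ω)|}) :
    ∑ ω, Q ω * (conj Φ (Kt ω) - conj Φ (Kstar Φ P Q ω)
        - deriv (conj Φ) (Kstar Φ P Q ω) * (Kt ω - Kstar Φ P Q ω)) ≤
      sSup {v : ℝ | ∃ k ∈ 𝒦, v =
        |(∑ ω, (conj Φ (k ω) - conj Φ (Kstar Φ P Q ω)) * (Q ω - Qt ω)) -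
          ∑ ω, (k ω - Kstar Φ P Q ω) * (P ω - Pt ω)|} := by
  classical
  set Ks := Kstar Φ P Q
  have hopt (ω : Ω) : IsMaxOn (fun b => P ω * b - Q ω * conj Φ b) (domStar Φ) (Ks ω) :=
    isMaxOn_apply_of_sum_le (fun ω b => P ω * b - Q ω * conj Φ b) (hdom Ks hKs)
      (fun k hk => by simpa only [Finset.sum_sub_distrib] using hKsmax k hk) ω
  have hbregman : ∑ ω, Q ω * (conj Φ (Kt ω) - conj Φ (Ks ω) - deriv (conj Φ) (Ks ω) * (Kt ω - Ks ω))
      ≤ ∑ ω, (Q ω * (conj Φ (Kt ω) - conj Φ (Ks ω)) - P ω * (Kt ω - Ks ω)) := by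
    refine Finset.sum_le_sum fun ω _ => ?_
    have := mul_sub_le_mul_deriv_conj (x := Ks ω) hconv (hdiff.of_le (by norm_num)) (hP0 ω)
      (hQ0 ω) rfl (hopt ω) (hdom Ks hKs ω) (hdom Kt hKt ω)
    rw [mul_sub (Q ω)]
    linarith
  have hdeviation : ∑ ω, (Q ω * (conj Φ (Kt ω) - conj Φ (Ks ω)) - P ω * (Kt ω - Ks ω))
      + ((∑ ω, Pt ω * Kt ω) - ∑ ω, Qt ω * conj Φ (Kt ω)
        - ((∑ ω, Pt ω * Ks ω) - ∑ ω, Qt ω * conj Φ (Ks ω)))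
      = (∑ ω, (conj Φ (Kt ω) - conj Φ (Ks ω)) * (Q ω - Qt ω))
        - ∑ ω, (Kt ω - Ks ω) * (P ω - Pt ω) := by
    simp only [← Finset.sum_sub_distrib, ← Finset.sum_add_distrib]
    exact Finset.sum_congr rfl fun ω _ => by ring
  linarith [hKtmax Ks hKs, le_abs_self ((∑ ω, (conj Φ (Kt ω) - conj Φ (Ks ω)) * (Q ω - Qt ω))
    - ∑ ω, (Kt ω - Ks ω) * (P ω - Pt ω)), le_csSup hbdd ⟨Kt, hKt, rfl⟩]

/-- Empirical risk maximizer Bregman bound: the Bregman divergence (w.r.t. `Φ*` and `Q`)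
of the empirical risk maximizer `K̃` from the ideal `K*` is bounded by the supremum, over
the class `𝒦`, of the deviation of the empirical objective from the population objective. -/
theorem erm_bregman_bound {Ω : Type*} [Fintype Ω]
    (Φ : ℝ → ℝ) (hconv : StrictConvexOn ℝ (Set.Ici 0) Φ)
    (hdiff : ContDiffOn ℝ 2 Φ (Set.Ioi 0))
    (P Q Pt Qt : Ω → ℝ)
    (hP0 : ∀ ω, 0 ≤ P ω) (hP1 : ∑ ω, P ω = 1)
    (hQ0 : ∀ ω, 0 < Q ω) (hQ1 : ∑ ω, Q ω = 1)
    (hPt0 : ∀ ω, 0 ≤ Pt ω) (hPt1 : ∑ ω, Pt ω = 1)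
    (hQt0 : ∀ ω, 0 ≤ Qt ω) (hQt1 : ∑ ω, Qt ω = 1)
    (𝒦 : Set (Ω → ℝ)) (hdom : ∀ k ∈ 𝒦, ∀ ω, k ω ∈ domStar Φ)
    (hKs : Kstar Φ P Q ∈ 𝒦)
    (hKsmax : ∀ k : Ω → ℝ, (∀ ω, k ω ∈ domStar Φ) →
        (∑ ω, P ω * k ω) - ∑ ω, Q ω * conj Φ (k ω) ≤
          (∑ ω, P ω * Kstar Φ P Q ω) - ∑ ω, Q ω * conj Φ (Kstar Φ P Q ω))
    (Kt : Ω → ℝ) (hKt : Kt ∈ 𝒦)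
    (hKtmax : ∀ k ∈ 𝒦,
        (∑ ω, Pt ω * k ω) - ∑ ω, Qt ω * conj Φ (k ω) ≤
          (∑ ω, Pt ω * Kt ω) - ∑ ω, Qt ω * conj Φ (Kt ω))
    (hbdd : BddAbove {v : ℝ | ∃ k ∈ 𝒦, v =
        |(∑ ω, (conj Φ (k ω) - conj Φ (Kstar Φ P Q ω)) * (Q ω - Qt ω)) -
          ∑ ω, (k ω - Kstar Φ P Q ω) * (P ω - Pt ω)|}) :
    ∑ ω, Q ω * (conj Φ (Kt ω) - conj Φ (Kstar Φ P Q ω)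
        - deriv (conj Φ) (Kstar Φ P Q ω) * (Kt ω - Kstar Φ P Q ω)) ≤
      sSup {v : ℝ | ∃ k ∈ 𝒦, v =
        |(∑ ω, (conj Φ (k ω) - conj Φ (Kstar Φ P Q ω)) * (Q ω - Qt ω)) -
          ∑ ω, (k ω - Kstar Φ P Q ω) * (P ω - Pt ω)|} :=
  erm_bregman_bound_general Φ hconv hdiff P Q Pt Qt hP0 hQ0 𝒦 hdom hKs hKsmax Kt hKt hKtmax hbdd
end
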